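/- For m > 1 let F_m(ρ) = ∫_Ω D ρ + (1/m)∫_Ω ρ^m and F(ρ) = ∫_Ω D ρ if ρ ≤ 1 a.e., +∞ otherwise, both defined on probability densities on Ω. Then for every fixed ρ, liminf_{m→∞} F_m(ρ) ≥ F(ρ), and lim_{m→∞} F_m(ρ) = F(ρ) whenever ρ ∈ L^∞. -/

import Mathlib

open MeasureTheory Filter Topology
open scoped ENNReal

/-!
If `ρ ≤ 1` a.e., the penalty `(1/m) ∫ ρ^m` is at most `|Ω| / m → 0`. Otherwise `ρ ≥ c > 1` on a
set `S` of positive measure, and the penalty is at least `(c^m / m) |S| → ∞`. So `F_m(ρ) → F(ρ)`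
for every density `ρ`, which gives both the liminf inequality and the limit.
-/

theorem tendsto_inv_natCast_mul_pow_atTop {r : ℝ} (hr : 1 < r) :
    Tendsto (fun m : ℕ => (m : ℝ)⁻¹ * r ^ m) atTop atTop := by
  have hpos : ∀ᶠ m : ℕ in atTop, (m : ℝ) ^ 1 / r ^ m ∈ Set.Ioi (0 : ℝ) := by
    filter_upwards [eventually_ge_atTop 1] with m hm
    have : (0 : ℝ) < m := by exact_mod_cast hm
    exact div_pos (pow_pos this 1) (pow_pos (by linarith) m)
  have h : Tendsto (fun m : ℕ => ((m : ℝ) ^ 1 / r ^ m)⁻¹) atTop atTop :=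
    (tendsto_nhdsWithin_of_tendsto_nhds_of_eventually_within _
      (tendsto_pow_const_div_const_pow_of_one_lt 1 hr) hpos).inv_tendsto_nhdsGT_zero
  refine h.congr fun m => ?_
  simp [div_eq_mul_inv, mul_comm]

section PowPenalty

variable {α : Type*} [MeasurableSpace α] (μ : Measure α) (f : α → ℝ≥0∞)

/-- `ENNReal.ofReal (m : ℝ)⁻¹` rather than `(m : ℝ≥0∞)⁻¹`, so that the `m = 0` term is `0`
as for the real coefficient `(0 : ℝ)⁻¹ = 0`. -/
noncomputable def powPenalty (m : ℕ) : ℝ≥0∞ :=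
  ENNReal.ofReal (m : ℝ)⁻¹ * ∫⁻ x, f x ^ m ∂μ

variable {μ f}

theorem tendsto_powPenalty_zero [IsFiniteMeasure μ] (hf : ∀ᵐ x ∂μ, f x ≤ 1) :
    Tendsto (powPenalty μ f) atTop (𝓝 0) := by
  have hle : ∀ m : ℕ, powPenalty μ f m ≤ ENNReal.ofReal (m : ℝ)⁻¹ * μ Set.univ := fun m => by
    refine mul_le_mul_right ?_ _
    calc ∫⁻ x, f x ^ m ∂μ ≤ ∫⁻ _, 1 ∂μ :=
          lintegral_mono_ae (hf.mono fun x hx => pow_le_one₀ zero_le hx)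
      _ = μ Set.univ := lintegral_one
  have hbound : Tendsto (fun m : ℕ => ENNReal.ofReal (m : ℝ)⁻¹ * μ Set.univ) atTop (𝓝 0) := by
    simpa using ENNReal.Tendsto.mul_const
      (ENNReal.tendsto_ofReal tendsto_inv_atTop_nhds_zero_nat) (Or.inr (measure_ne_top μ _))
  exact tendsto_of_tendsto_of_tendsto_of_le_of_le tendsto_const_nhds hbound (fun _ => zero_le) hle

theorem exists_one_lt_measure_le_ne_zero (hf : ¬ ∀ᵐ x ∂μ, f x ≤ 1) :
    ∃ c : ℝ, 1 < c ∧ μ {x | ENNReal.ofReal c ≤ f x} ≠ 0 := by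
  have hlim : Tendsto (fun n : ℕ => ENNReal.ofReal (1 + 1 / (n + 1 : ℝ))) atTop (𝓝 1) := by
    simpa using ENNReal.tendsto_ofReal
      (tendsto_const_nhds (x := (1 : ℝ)) |>.add tendsto_one_div_add_atTop_nhds_zero_nat)
  have hsub : {x | ¬ f x ≤ 1} ⊆ ⋃ n : ℕ, {x | ENNReal.ofReal (1 + 1 / (n + 1 : ℝ)) ≤ f x} :=
    fun x hx => Set.mem_iUnion.2 ((hlim.eventually (gt_mem_nhds (not_le.1 hx))).exists.imp
      fun _ => le_of_lt)
  obtain ⟨n, hn⟩ : ∃ n : ℕ, μ {x | ENNReal.ofReal (1 + 1 / (n + 1 : ℝ)) ≤ f x} ≠ 0 := by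
    by_contra! h
    exact hf (ae_iff.2 (measure_mono_null hsub (measure_iUnion_null_iff.2 h)))
  exact ⟨_, lt_add_of_pos_right _ (by positivity), hn⟩

theorem tendsto_powPenalty_top (hmeas : AEMeasurable f μ) (hf : ¬ ∀ᵐ x ∂μ, f x ≤ 1) :
    Tendsto (powPenalty μ f) atTop (𝓝 ∞) := by
  obtain ⟨c, hc, hS⟩ := exists_one_lt_measure_le_ne_zero hf
  have hlow : ∀ m : ℕ, ENNReal.ofReal ((m : ℝ)⁻¹ * c ^ m) * μ {x | ENNReal.ofReal c ≤ f x}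
      ≤ powPenalty μ f m := fun m => by
    rw [ENNReal.ofReal_mul (by positivity), mul_assoc, powPenalty]
    refine mul_le_mul_right ?_ _
    calc ENNReal.ofReal (c ^ m) * μ {x | ENNReal.ofReal c ≤ f x}
        ≤ ENNReal.ofReal (c ^ m) * μ {x | ENNReal.ofReal (c ^ m) ≤ f x ^ m} := by
          refine mul_le_mul_right (measure_mono fun x (hx : ENNReal.ofReal c ≤ f x) => ?_) _
          change ENNReal.ofReal (c ^ m) ≤ f x ^ m
          rw [ENNReal.ofReal_pow (by linarith)]
          exact pow_le_pow_left₀ zero_le hx m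
      _ ≤ ∫⁻ x, f x ^ m ∂μ := mul_meas_ge_le_lintegral₀ (hmeas.pow_const m) _
  have hgrow := ENNReal.Tendsto.mul_const
    (ENNReal.tendsto_ofReal_atTop.comp (tendsto_inv_natCast_mul_pow_atTop hc))
    (b := μ {x | ENNReal.ofReal c ≤ f x}) (Or.inl ENNReal.top_ne_zero)
  rw [ENNReal.top_mul hS] at hgrow
  exact tendsto_nhds_top_mono hgrow (Eventually.of_forall hlow)

end PowPenalty

theorem EReal.tendsto_coe_add_coe_ennreal {ι : Type*} {l : Filter ι} {g : ι → ℝ≥0∞} {b : ℝ≥0∞}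
    (a : ℝ) (hg : Tendsto g l (𝓝 b)) :
    Tendsto (fun i => (a : EReal) + g i) l (𝓝 (a + b)) := by
  have hcont : ContinuousAt (fun p : EReal × EReal => p.1 + p.2) ((a : EReal), (b : EReal)) :=
    EReal.continuousAt_add (Or.inl (EReal.coe_ne_top a)) (Or.inl (EReal.coe_ne_bot a))
  exact hcont.tendsto.comp (tendsto_const_nhds.prodMk_nhds
    ((continuous_coe_ennreal_ereal.tendsto b).comp hg))

theorem stmt17_general {d : ℕ} (Ω : Set (EuclideanSpace ℝ (Fin d)))
    (hΩfin : volume Ω < ⊤)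
    (D : EuclideanSpace ℝ (Fin d) → ℝ)
    (ρ : EuclideanSpace ℝ (Fin d) → ℝ) (hρmeas : Measurable ρ)
    (Fm : ℕ → EReal)
    (hFm : Fm = fun (m : ℕ) => ((∫ x in Ω, D x * ρ x : ℝ) : EReal) +
      (((m : ℝ)⁻¹ : ℝ) : EReal) *
        ((∫⁻ x in Ω, (ENNReal.ofReal (ρ x)) ^ m : ℝ≥0∞) : EReal))
    (F : EReal)
    (hF : ((∀ᵐ x ∂(volume.restrict Ω), ρ x ≤ 1) →
            F = ((∫ x in Ω, D x * ρ x : ℝ) : EReal)) ∧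
          (¬ (∀ᵐ x ∂(volume.restrict Ω), ρ x ≤ 1) → F = ⊤)) :
    F ≤ atTop.liminf Fm ∧
    ((∃ C : ℝ, ∀ᵐ x ∂(volume.restrict Ω), ρ x ≤ C) → Tendsto Fm atTop (nhds F)) := by
  have hFm_eq : Fm = fun m => ((∫ x in Ω, D x * ρ x : ℝ) : EReal) +
      powPenalty (volume.restrict Ω) (fun x => ENNReal.ofReal (ρ x)) m := by
    rw [hFm]
    funext m
    rw [powPenalty, EReal.coe_ennreal_mul, EReal.coe_ennreal_ofReal, max_eq_left (by positivity)]
  have hle_iff : (∀ᵐ x ∂(volume.restrict Ω), ρ x ≤ 1) ↔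
      ∀ᵐ x ∂(volume.restrict Ω), ENNReal.ofReal (ρ x) ≤ 1 := by
    simp only [ENNReal.ofReal_le_one]
  have hlim : Tendsto Fm atTop (𝓝 F) := by
    rw [hFm_eq]
    by_cases hle : ∀ᵐ x ∂(volume.restrict Ω), ρ x ≤ 1
    · have : IsFiniteMeasure (volume.restrict Ω) := isFiniteMeasure_restrict.2 hΩfin.ne
      simpa [hF.1 hle] using
        EReal.tendsto_coe_add_coe_ennreal _ (tendsto_powPenalty_zero (hle_iff.1 hle))
    · simpa [hF.2 hle] using EReal.tendsto_coe_add_coe_ennreal _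
        (tendsto_powPenalty_top hρmeas.ennreal_ofReal.aemeasurable (hle_iff.not.1 hle))
  exact ⟨hlim.liminf_eq.ge, fun _ => hlim⟩

/-- Pointwise part of the Γ-convergence `F_m → F`: with
`F_m(ρ) = ∫ D ρ + (1/m)∫ ρ^m` and `F(ρ) = ∫ D ρ` if `ρ ≤ 1` a.e. (`+∞` otherwise),
one has `F(ρ) ≤ liminf_m F_m(ρ)`, and `F_m(ρ) → F(ρ)` whenever `ρ ∈ L^∞`. -/
theorem stmt17 {d : ℕ} (Ω : Set (EuclideanSpace ℝ (Fin d)))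
    (hΩmeas : MeasurableSet Ω) (hΩbdd : Bornology.IsBounded Ω) (hΩfin : volume Ω < ⊤)
    (D : EuclideanSpace ℝ (Fin d) → ℝ) (hDcont : Continuous D)
    (CD : ℝ) (hDbdd : ∀ x, |D x| ≤ CD)
    (ρ : EuclideanSpace ℝ (Fin d) → ℝ) (hρmeas : Measurable ρ)
    (hρnonneg : ∀ x, 0 ≤ ρ x) (hρint : IntegrableOn ρ Ω)
    (hρmass : ∫ x in Ω, ρ x = 1)
    (Fm : ℕ → EReal)
    (hFm : Fm = fun (m : ℕ) => ((∫ x in Ω, D x * ρ x : ℝ) : EReal) +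
      (((m : ℝ)⁻¹ : ℝ) : EReal) *
        ((∫⁻ x in Ω, (ENNReal.ofReal (ρ x)) ^ m : ℝ≥0∞) : EReal))
    (F : EReal)
    (hF : ((∀ᵐ x ∂(volume.restrict Ω), ρ x ≤ 1) →
            F = ((∫ x in Ω, D x * ρ x : ℝ) : EReal)) ∧
          (¬ (∀ᵐ x ∂(volume.restrict Ω), ρ x ≤ 1) → F = ⊤)) :
    F ≤ atTop.liminf Fm ∧
    ((∃ C : ℝ, ∀ᵐ x ∂(volume.restrict Ω), ρ x ≤ C) → Tendsto Fm atTop (nhds F)) :=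
  stmt17_general Ω hΩfin D ρ hρmeas Fm hFm F hF
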